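/- Let n ≥ 1 and let T : ℝⁿ → ℝⁿ be monotone, additively homogeneous, and convex. Consider the directed graph G on vertex set {1,…,n} with an edge from i to j if and only if j ∈ supp(T_i), and for C ⊆ {1,…,n} let hreach(C) be the smallest set R ⊆ {1,…,n} containing C and satisfying: whenever J ⊆ R is nonempty, i ∉ J, and the set {T_i(−t·e_J) : t ≥ 0} is unbounded below, then i ∈ R. Then all additive slice spaces A_α^β(T) = {x : α·e + x ≤ T(x) ≤ β·e + x}, α ≤ β, are bounded in Hilbert's seminorm if and only if G has exactly one final class C and hreach(C) = {1,…,n}. -/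

import Mathlib

/-- `T` is additively homogeneous: `T(x + c·e) = T(x) + c·e`. -/
def AddHomog (n : ℕ) (T : (Fin n → ℝ) → (Fin n → ℝ)) : Prop :=
  ∀ (x : Fin n → ℝ) (c : ℝ), T (fun i => x i + c) = fun i => T x i + c

/-- The support of `g : ℝⁿ → ℝ`: indices `i` on which `g` effectively depends. -/
def Supp (n : ℕ) (g : (Fin n → ℝ) → ℝ) : Set (Fin n) :=
  {i | ∃ x y : Fin n → ℝ, (∀ j, j ≠ i → x j = y j) ∧ g x ≠ g y}

/-- Hilbert's seminorm. -/
noncomputable def hilbertSeminorm (n : ℕ) (x : Fin n → ℝ) : ℝ :=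
  (⨆ i, x i) - ⨅ i, x i

/-- The additive slice space `A_α^β(T)`. -/
def addSliceSpace (n : ℕ) (T : (Fin n → ℝ) → (Fin n → ℝ)) (α β : ℝ) : Set (Fin n → ℝ) :=
  {x | ∀ i, α + x i ≤ T x i ∧ T x i ≤ β + x i}

/-- Edge relation of the digraph `G`: there is an edge from `i` to `j`
iff `j ∈ supp(T_i)`. -/
def GEdge (n : ℕ) (T : (Fin n → ℝ) → (Fin n → ℝ)) (i j : Fin n) : Prop :=
  j ∈ Supp n (fun x => T x i)

/-- `C` is a final class of the digraph: it is nonempty, every edge starting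
in `C` ends in `C`, and any two vertices of `C` are joined by a directed path. -/
def FinalClass (n : ℕ) (T : (Fin n → ℝ) → (Fin n → ℝ)) (C : Set (Fin n)) : Prop :=
  C.Nonempty ∧ (∀ i ∈ C, ∀ j, GEdge n T i j → j ∈ C) ∧
    (∀ i ∈ C, ∀ j ∈ C, Relation.ReflTransGen (GEdge n T) i j)

/-- `R` is closed for hypergraph reachability: whenever `J ⊆ R` is nonempty,
`i ∉ J`, and `{T_i(−t·e_J) : t ≥ 0}` is unbounded below, then `i ∈ R`. -/
def HClosed (n : ℕ) (T : (Fin n → ℝ) → (Fin n → ℝ)) (R : Set (Fin n)) : Prop :=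
  ∀ (J : Set (Fin n)) (i : Fin n), J.Nonempty → J ⊆ R → i ∉ J →
    (∀ c : ℝ, ∃ t : ℝ, 0 ≤ t ∧ T (J.indicator fun _ => -t) i < c) → i ∈ R

/-- `hreach(C)`: the smallest set containing `C` that is closed for
hypergraph reachability. -/
def HReach (n : ℕ) (T : (Fin n → ℝ) → (Fin n → ℝ)) (C : Set (Fin n)) : Set (Fin n) :=
  ⋂₀ {R | C ⊆ R ∧ HClosed n T R}

/-!
If `C` is the unique final class and `hreach(C)` is everything, the slices are bounded. Along an
edge `u → w` of `G`, convexity and monotonicity force `T_u` to grow at least linearly in `x_w`,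
so on a slice `x_w - min x` is controlled by `x_u - min x`; following paths that start at a
coordinate where `x` is minimal bounds `x_i - min x` for `i ∈ C`. Among slice points normalized by
`max x = 0`, the coordinates that tend to `-∞` whenever `min x` does therefore contain `C`, and
they form a set closed under the hypergraph rule, so all coordinates do: impossible, as one of
them is `0`.

Conversely, let `K` be nonempty and disjoint from a nonempty set `D` closed under edges, with
`T_i(-t·e_{Kᶜ})` bounded below for `i ∈ K`: a second final class, or the complement of `hreach(C)`.
A Tarski fixed point of `z ↦ max(t·e_K, T z - β)` in `[0, t]ⁿ` then lies in one slice for all `t`,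
equals `t` on `K` and vanishes somewhere on `D`.
-/

open Filter Set

theorem exists_fixedPoint_of_mapsTo_Icc {γ : Type*} [ConditionallyCompleteLattice γ]
    {f : γ → γ} {a b : γ} (hab : a ≤ b) (hf : MonotoneOn f (Icc a b))
    (hmaps : MapsTo f (Icc a b) (Icc a b)) : ∃ z ∈ Icc a b, f z = z := by
  have : Fact (a ≤ b) := ⟨hab⟩
  let g : Icc a b →o Icc a b := ⟨hmaps.restrict f _ _, fun x y hxy => hf x.2 y.2 hxy⟩
  exact ⟨g.lfp, g.lfp.2, congrArg Subtype.val g.map_lfp⟩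

theorem ConvexOn.comp_add_smul {E : Type*} [AddCommGroup E] [Module ℝ E] {f : E → ℝ}
    (hf : ConvexOn ℝ univ f) (x v : E) : ConvexOn ℝ univ fun s : ℝ => f (x + s • v) := by
  refine ⟨convex_univ, fun a _ b _ μ ν hμ hν hμν => ?_⟩
  have hline : x + (μ * a + ν * b) • v = μ • (x + a • v) + ν • (x + b • v) := by
    linear_combination (norm := module) (-hμν) • x
  simpa only [smul_eq_mul, hline] using hf.2 (mem_univ _) (mem_univ _) hμ hν hμν

theorem Monotone.const_or_linear_lowerBound_of_convexOn {φ : ℝ → ℝ} (hmono : Monotone φ)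
    (hconv : ConvexOn ℝ univ φ) :
    (∀ s, 0 ≤ s → φ s = φ 0) ∨ ∃ δ > 0, ∃ c, ∀ s, 0 ≤ s → δ * s + c ≤ φ s := by
  by_cases hconst : ∀ s, 0 ≤ s → φ s = φ 0
  · exact Or.inl hconst
  push Not at hconst
  obtain ⟨s₀, hs₀, hne⟩ := hconst
  have hs₀pos : 0 < s₀ := hs₀.lt_of_ne (by rintro rfl; exact hne rfl)
  set δ := (φ s₀ - φ 0) / s₀ with hδ_def
  have hδ : 0 < δ := div_pos (sub_pos.2 ((hmono hs₀).lt_of_ne' hne)) hs₀pos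
  refine Or.inr ⟨δ, hδ, φ 0 - δ * s₀, fun s hs => ?_⟩
  rcases le_total s s₀ with hss | hss
  · nlinarith [hmono hs]
  · have hslope := hconv.secant_mono (mem_univ 0) (mem_univ s₀) (mem_univ s) hs₀pos.ne'
      (hs₀pos.trans_le hss).ne' hss
    rw [sub_zero, sub_zero, ← hδ_def, le_div_iff₀ (hs₀pos.trans_le hss)] at hslope
    nlinarith

section Coordinates

variable {ι : Type*} {f : (ι → ℝ) → ℝ}

theorem le_add_of_monotone_of_add_const (hmono : Monotone f)
    (hhom : ∀ x c, f (fun i => x i + c) = f x + c) {x y : ι → ℝ} {c : ℝ}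
    (h : ∀ i, x i ≤ y i + c) : f x ≤ f y + c :=
  (hmono h).trans_eq (hhom y c)

theorem monotone_add_smul (hmono : Monotone f) (x : ι → ℝ) {v : ι → ℝ} (hv : 0 ≤ v) :
    Monotone fun s : ℝ => f (x + s • v) := fun _ _ hst =>
  hmono (add_le_add_right (smul_le_smul_of_nonneg_right hst hv) x)

theorem apply_add_smul_eq_of_ray_const [Finite ι] (hmono : Monotone f)
    (hhom : ∀ x c, f (fun i => x i + c) = f x + c) (hconv : ConvexOn ℝ univ f)
    {v : ι → ℝ} (hv : 0 ≤ v) (hray : ∀ s : ℝ, 0 ≤ s → f (s • v) = f 0) (x : ι → ℝ) {s : ℝ}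
    (hs : 0 ≤ s) :
    f (x + s • v) = f x := by
  obtain ⟨N, hN⟩ := (finite_range x).bddAbove
  have hbdd : ∀ s : ℝ, 0 ≤ s → f (x + s • v) ≤ f 0 + N := fun s hs =>
    (hray s hs).symm ▸ le_add_of_monotone_of_add_const hmono hhom fun i =>
      by simpa [add_comm] using hN (mem_range_self i)
  rcases (monotone_add_smul hmono x hv).const_or_linear_lowerBound_of_convexOn
    (hconv.comp_add_smul x v) with hconst | ⟨δ, hδ, c, hc⟩
  · simpa using hconst s hs
  · set s₁ := max ((f 0 + N - c + 1) / δ) 0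
    have hs₁ : f 0 + N - c + 1 ≤ δ * s₁ := (div_le_iff₀' hδ).1 (le_max_left _ _)
    linarith [hc s₁ (le_max_right _ _), hbdd s₁ (le_max_right _ _)]

end Coordinates

section Support

variable {n : ℕ}

theorem dependsOn_supp (g : (Fin n → ℝ) → ℝ) : DependsOn g (Supp n g) := by
  intro x y hxy
  suffices h : ∀ (s : Finset (Fin n)) (x : Fin n → ℝ), (∀ j ∈ Supp n g, x j = y j) →
      (∀ j ∉ s, x j = y j) → g x = g y from h Finset.univ x hxy (by simp)
  intro s
  induction s using Finset.induction_on with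
  | empty => exact fun x _ hx => congrArg g (funext fun j => hx j (Finset.notMem_empty j))
  | insert a s _ ih =>
    intro x hsupp hx
    set x' := Function.update x a (y a)
    have hstep : g x = g x' := by
      by_contra hne
      have ha : a ∈ Supp n g := ⟨x, x', fun j hj => (Function.update_of_ne hj _ _).symm, hne⟩
      exact hne (congrArg g (Function.update_eq_self_iff.2 (hsupp a ha).symm).symm)
    rw [hstep]
    refine ih x' (fun j hj => ?_) (fun j hj => ?_) <;> by_cases hja : j = a
    · subst hja; simp [x']
    · simp [x', hja, hsupp j hj]
    · subst hja; simp [x']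
    · simp [x', hja, hx j (by simp [hja, hj])]

variable {f : (Fin n → ℝ) → ℝ}

theorem notMem_supp_of_ray_const (hmono : Monotone f)
    (hhom : ∀ x c, f (fun i => x i + c) = f x + c) (hconv : ConvexOn ℝ univ f) {j : Fin n}
    (hray : ∀ s : ℝ, 0 ≤ s → f (s • Pi.single j 1) = f 0) : j ∉ Supp n f := by
  have hline := apply_add_smul_eq_of_ray_const hmono hhom hconv
    (Pi.single_nonneg.2 zero_le_one) hray
  have key : ∀ x y : Fin n → ℝ, (∀ k, k ≠ j → x k = y k) → x j ≤ y j → f x = f y := by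
    intro x y hxy hle
    have hy : y = x + (y j - x j) • Pi.single j 1 := by
      ext k
      by_cases hk : k = j
      · subst hk; simp
      · simp [hk, hxy k hk]
    rw [hy, hline x (sub_nonneg.2 hle)]
  rintro ⟨x, y, hxy, hne⟩
  rcases le_total (x j) (y j) with h | h
  · exact hne (key x y hxy h)
  · exact hne (key y x (fun k hk => (hxy k hk).symm) h).symm

theorem exists_linear_lowerBound_of_mem_supp (hmono : Monotone f)
    (hhom : ∀ x c, f (fun i => x i + c) = f x + c) (hconv : ConvexOn ℝ univ f) {j : Fin n}
    (hj : j ∈ Supp n f) : ∃ δ > 0, ∃ c, ∀ s, 0 ≤ s → δ * s + c ≤ f (s • Pi.single j 1) := by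
  have hmono_ray := monotone_add_smul hmono 0 (v := Pi.single j 1)
    (Pi.single_nonneg.2 (zero_le_one (α := ℝ)))
  have hconv_ray := hconv.comp_add_smul 0 (Pi.single j (1 : ℝ))
  simp only [zero_add] at hmono_ray hconv_ray
  refine (hmono_ray.const_or_linear_lowerBound_of_convexOn hconv_ray).resolve_left fun hconst => ?_
  exact notMem_supp_of_ray_const hmono hhom hconv (fun s hs => by simpa using hconst s hs) hj

end Support

section Graph

variable {n : ℕ} {T : (Fin n → ℝ) → (Fin n → ℝ)}

theorem mem_of_reflTransGen_of_closed {D : Set (Fin n)}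
    (hD : ∀ i ∈ D, ∀ j, GEdge n T i j → j ∈ D) {v w : Fin n} (hv : v ∈ D)
    (hvw : Relation.ReflTransGen (GEdge n T) v w) : w ∈ D := by
  induction hvw with
  | refl => exact hv
  | tail _ hedge ih => exact hD _ ih _ hedge

theorem exists_finalClass_subset {D : Set (Fin n)} (hne : D.Nonempty)
    (hD : ∀ i ∈ D, ∀ j, GEdge n T i j → j ∈ D) : ∃ C, FinalClass n T C ∧ C ⊆ D := by
  let reach : Fin n → Set (Fin n) := fun v => {w | Relation.ReflTransGen (GEdge n T) v w}
  obtain ⟨v, hvD, hvmin⟩ := D.exists_min_image (fun v => (reach v).ncard) D.toFinite hne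
  refine ⟨reach v, ⟨⟨v, .refl⟩, fun i hi j hij => hi.tail hij, fun u hu u' hu' => ?_⟩,
    fun w hw => mem_of_reflTransGen_of_closed hD hvD hw⟩
  -- `reach v` has minimal size, so it is the reach set of every `u` it contains
  have hsub : reach u ⊆ reach v := fun w hw => hu.trans hw
  have heq : reach u = reach v := Set.eq_of_subset_of_ncard_le hsub
    (hvmin u (mem_of_reflTransGen_of_closed hD hvD hu)) (toFinite _)
  show u' ∈ reach u
  rwa [heq]

theorem FinalClass.eq_of_mem {C C' : Set (Fin n)} (hC : FinalClass n T C)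
    (hC' : FinalClass n T C') {v : Fin n} (hv : v ∈ C) (hv' : v ∈ C') : C = C' :=
  Set.Subset.antisymm (fun _ hu => mem_of_reflTransGen_of_closed hC'.2.1 hv' (hC.2.2 v hv _ hu))
    (fun _ hu => mem_of_reflTransGen_of_closed hC.2.1 hv (hC'.2.2 v hv' _ hu))

theorem reflTransGen_of_mem_unique_finalClass {C : Set (Fin n)}
    (huniq : ∀ C', FinalClass n T C' → C' = C) (v : Fin n) {i : Fin n} (hi : i ∈ C) :
    Relation.ReflTransGen (GEdge n T) v i := by
  obtain ⟨C', hC', hsub⟩ := exists_finalClass_subset (T := T) ⟨v, .refl⟩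
    fun _ hu _ huw => Relation.ReflTransGen.tail hu huw
  exact hsub (huniq C' hC' ▸ hi)

theorem subset_hReach (C : Set (Fin n)) : C ⊆ HReach n T C :=
  fun _ hi => mem_sInter.2 fun _ hR => hR.1 hi

theorem hReach_subset {C R : Set (Fin n)} (hCR : C ⊆ R) (hR : HClosed n T R) :
    HReach n T C ⊆ R :=
  sInter_subset_of_mem ⟨hCR, hR⟩

theorem hClosed_hReach (C : Set (Fin n)) : HClosed n T (HReach n T C) :=
  fun J i hJ hJR hiJ hunb => mem_sInter.2 fun _ hR =>
    hR.2 J i hJ (hJR.trans (sInter_subset_of_mem hR)) hiJ hunb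

end Graph

def SlicesBounded (n : ℕ) (T : (Fin n → ℝ) → (Fin n → ℝ)) : Prop :=
  ∀ α β : ℝ, α ≤ β → ∃ M : ℝ, ∀ x ∈ addSliceSpace n T α β, hilbertSeminorm n x ≤ M

def normalizedSlice (n : ℕ) (T : (Fin n → ℝ) → (Fin n → ℝ)) (α β : ℝ) : Set (Fin n → ℝ) :=
  {x | x ∈ addSliceSpace n T α β ∧ x ≤ 0 ∧ ∃ v, x v = 0}

noncomputable def sliceAtBot (n : ℕ) (T : (Fin n → ℝ) → (Fin n → ℝ)) (α β : ℝ) :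
    Filter (Fin n → ℝ) :=
  comap (fun x => ⨅ i, x i) atBot ⊓ 𝓟 (normalizedSlice n T α β)

section Slices

variable {n : ℕ} {T : (Fin n → ℝ) → (Fin n → ℝ)} {α β : ℝ}

theorem AddHomog.apply (hhom : AddHomog n T) (i : Fin n) (x : Fin n → ℝ) (c : ℝ) :
    T (fun k => x k + c) i = T x i + c :=
  congrFun (hhom x c) i

theorem add_const_mem_addSliceSpace (hhom : AddHomog n T) {x : Fin n → ℝ}
    (hx : x ∈ addSliceSpace n T α β) (c : ℝ) : (fun i => x i + c) ∈ addSliceSpace n T α β :=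
  fun i => by
    rw [hhom.apply]
    constructor <;> linarith [hx i]

theorem sub_le_hilbertSeminorm (x : Fin n → ℝ) (i j : Fin n) : x i - x j ≤ hilbertSeminorm n x :=
  sub_le_sub (le_ciSup (finite_range x).bddAbove i) (ciInf_le (finite_range x).bddBelow j)

theorem exists_sub_iInf_le_of_gEdge (hmono : Monotone T) (hhom : AddHomog n T)
    (hconv : ∀ i, ConvexOn ℝ univ fun x => T x i) {u w : Fin n} (huw : GEdge n T u w)
    {X : Set (Fin n → ℝ)} (hX : X ⊆ addSliceSpace n T α β) {B : ℝ}
    (hB : ∀ x ∈ X, x u - ⨅ k, x k ≤ B) : ∃ B', ∀ x ∈ X, x w - ⨅ k, x k ≤ B' := by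
  obtain ⟨δ, hδ, c, hc⟩ := exists_linear_lowerBound_of_mem_supp
    (fun _ _ h => hmono h u) (hhom.apply u) (hconv u) huw
  refine ⟨(β - c + B) / δ, fun x hx => ?_⟩
  set m := ⨅ k, x k
  have hm : ∀ k, m ≤ x k := ciInf_le (finite_range x).bddBelow
  have hbelow : (fun k => ((x w - m) • Pi.single w 1 : Fin n → ℝ) k + m) ≤ x := by
    intro k
    by_cases hk : k = w
    · subst hk; simp
    · simpa [hk] using hm k
  have hTu := hmono hbelow u
  rw [hhom.apply] at hTu
  rw [le_div_iff₀' hδ]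
  linarith [hc (x w - m) (sub_nonneg.2 (hm w)), (hX hx u).2, hB x hx]

theorem exists_sub_iInf_le_of_reflTransGen (hmono : Monotone T) (hhom : AddHomog n T)
    (hconv : ∀ i, ConvexOn ℝ univ fun x => T x i) {X : Set (Fin n → ℝ)}
    (hX : X ⊆ addSliceSpace n T α β) {v i : Fin n} (hvi : Relation.ReflTransGen (GEdge n T) v i)
    (hv : ∃ B, ∀ x ∈ X, x v - ⨅ k, x k ≤ B) : ∃ B, ∀ x ∈ X, x i - ⨅ k, x k ≤ B := by
  induction hvi with
  | refl => exact hv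
  | tail _ huw ih =>
    obtain ⟨B, hB⟩ := ih
    exact exists_sub_iInf_le_of_gEdge hmono hhom hconv huw hX hB

theorem exists_le_iInf_add_of_mem_unique_finalClass (hmono : Monotone T) (hhom : AddHomog n T)
    (hconv : ∀ i, ConvexOn ℝ univ fun x => T x i) {C : Set (Fin n)}
    (huniq : ∀ C', FinalClass n T C' → C' = C) {i : Fin n} (hi : i ∈ C) :
    ∃ S, ∀ x ∈ addSliceSpace n T α β, x i ≤ (⨅ k, x k) + S := by
  -- bound `x i` separately on the slice points attaining their minimum at `v`
  have hpath : ∀ v, ∃ B, ∀ x ∈ {x ∈ addSliceSpace n T α β | x v = ⨅ k, x k},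
      x i - ⨅ k, x k ≤ B := fun v =>
    exists_sub_iInf_le_of_reflTransGen hmono hhom hconv (fun _ hx => hx.1)
      (reflTransGen_of_mem_unique_finalClass huniq v hi) ⟨0, fun x hx => by rw [hx.2, sub_self]⟩
  choose B hB using hpath
  obtain ⟨S, hS⟩ := (finite_range B).bddAbove
  refine ⟨S, fun x hx => ?_⟩
  have : Nonempty (Fin n) := ⟨i⟩
  obtain ⟨v, hv⟩ := exists_eq_ciInf_of_finite (f := x)
  linarith [hB v x ⟨hx, hv⟩, hS (mem_range_self v)]

theorem eventually_mem_normalizedSlice :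
    ∀ᶠ x in sliceAtBot n T α β, x ∈ normalizedSlice n T α β :=
  mem_inf_of_right (mem_principal_self _)

theorem tendsto_sliceAtBot_of_le_iInf_add {i : Fin n} {S : ℝ}
    (h : ∀ x ∈ addSliceSpace n T α β, x i ≤ (⨅ k, x k) + S) :
    Tendsto (fun x => x i) (sliceAtBot n T α β) atBot :=
  tendsto_atBot_mono' _ (eventually_mem_normalizedSlice.mono fun x hx => h x hx.1)
    (tendsto_atBot_add_const_right _ S (tendsto_comap.mono_left inf_le_left))

theorem hClosed_setOf_tendsto_sliceAtBot (hmono : Monotone T) :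
    HClosed n T {i | Tendsto (fun x => x i) (sliceAtBot n T α β) atBot} := by
  intro J i _ hJ _ hunb
  refine tendsto_atBot.2 fun c => ?_
  obtain ⟨t, -, ht⟩ := hunb (α + c)
  have hJt : ∀ᶠ x in sliceAtBot n T α β, ∀ j ∈ J, x j ≤ -t :=
    (eventually_all_finite J.toFinite).2 fun j hj => tendsto_atBot.1 (hJ hj) (-t)
  filter_upwards [hJt, eventually_mem_normalizedSlice] with x hxJ hx
  have hle : x ≤ J.indicator fun _ => -t := fun k => by
    by_cases hk : k ∈ J
    · simpa [hk] using hxJ k hk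
    · simpa [hk] using hx.2.1 k
  linarith [(hx.1 i).1, hmono hle i]

theorem exists_lt_iInf_of_forall_tendsto_sliceAtBot
    (h : ∀ i, Tendsto (fun x => x i) (sliceAtBot n T α β) atBot) :
    ∃ c, ∀ x ∈ normalizedSlice n T α β, c < ⨅ k, x k := by
  have hbot : sliceAtBot n T α β = ⊥ := by
    rw [← eventually_false_iff_eq_bot]
    filter_upwards [eventually_all.2 fun i => tendsto_atBot.1 (h i) (-1),
      eventually_mem_normalizedSlice] with x hneg ⟨_, _, v, hv⟩
    linarith [hneg v]
  rw [sliceAtBot, inf_principal_eq_bot, mem_comap] at hbot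
  obtain ⟨t, ht, hsub⟩ := hbot
  obtain ⟨c, hc⟩ := mem_atBot_sets.1 ht
  exact ⟨c, fun x hx => not_le.1 fun hle => hsub (hc _ hle) hx⟩

theorem hilbertSeminorm_le_of_lt_iInf [Nonempty (Fin n)] (hhom : AddHomog n T) {c : ℝ}
    (hc : ∀ y ∈ normalizedSlice n T α β, c < ⨅ k, y k) {x : Fin n → ℝ}
    (hx : x ∈ addSliceSpace n T α β) : hilbertSeminorm n x ≤ -c := by
  obtain ⟨v, hv⟩ := exists_eq_ciSup_of_finite (f := x)
  obtain ⟨w, hw⟩ := exists_eq_ciInf_of_finite (f := x)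
  have hy : (fun k => x k + -x v) ∈ normalizedSlice n T α β := by
    refine ⟨add_const_mem_addSliceSpace hhom hx _, fun k => ?_, v, by simp⟩
    have := hv ▸ le_ciSup (finite_range x).bddAbove k
    show x k + -x v ≤ 0
    linarith
  have := (hc _ hy).trans_le (ciInf_le (finite_range _).bddBelow w)
  rw [hilbertSeminorm, ← hv, ← hw]
  linarith

theorem slicesBounded_of_unique_finalClass (hmono : Monotone T) (hhom : AddHomog n T)
    (hconv : ∀ i, ConvexOn ℝ univ fun x => T x i) {C : Set (Fin n)} (hC : FinalClass n T C)
    (huniq : ∀ C', FinalClass n T C' → C' = C) (hreach : HReach n T C = univ) :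
    SlicesBounded n T := by
  intro α β _
  obtain ⟨i₀, -⟩ := hC.1
  have : Nonempty (Fin n) := ⟨i₀⟩
  have hgood : HReach n T C ⊆ {i | Tendsto (fun x => x i) (sliceAtBot n T α β) atBot} :=
    hReach_subset (fun i hi => by
      obtain ⟨S, hS⟩ := exists_le_iInf_add_of_mem_unique_finalClass (α := α) (β := β)
        hmono hhom hconv huniq hi
      exact tendsto_sliceAtBot_of_le_iInf_add hS)
      (hClosed_setOf_tendsto_sliceAtBot hmono)
  obtain ⟨c, hc⟩ :=
    exists_lt_iInf_of_forall_tendsto_sliceAtBot fun i => hgood (hreach ▸ mem_univ i)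
  exact ⟨-c, fun x hx => hilbertSeminorm_le_of_lt_iInf hhom hc hx⟩

end Slices

section Unbounded

variable {n : ℕ} {T : (Fin n → ℝ) → (Fin n → ℝ)}

theorem exists_obstacle_fixedPoint (hmono : Monotone T) (hhom : AddHomog n T)
    (K : Set (Fin n)) {β t : ℝ} (hβ : ∀ i, T 0 i ≤ β) (ht : 0 ≤ t) :
    ∃ z : Fin n → ℝ, 0 ≤ z ∧ z ≤ (fun _ => t) ∧
      ∀ i, z i = max (K.indicator (fun _ => t) i) (T z i - β) := by
  set F : (Fin n → ℝ) → (Fin n → ℝ) := fun z i => max (K.indicator (fun _ => t) i) (T z i - β)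
  have hmaps : MapsTo F (Icc 0 fun _ => t) (Icc 0 fun _ => t) := by
    intro z hz
    refine ⟨fun i => le_max_of_le_left (indicator_nonneg (fun _ _ => ht) i),
      fun i => max_le (indicator_le_self' (fun _ _ => ht) i) ?_⟩
    have := le_add_of_monotone_of_add_const (fun _ _ h => hmono h i) (hhom.apply i)
      (x := z) (y := 0) (c := t) fun k => by simpa using hz.2 k
    linarith [hβ i]
  obtain ⟨z, ⟨hz0, hzt⟩, hz⟩ := exists_fixedPoint_of_mapsTo_Icc (f := F) (fun _ => ht)
    (fun _ _ _ _ hxy i => max_le_max le_rfl (sub_le_sub_right (hmono hxy i) β)) hmaps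
  exact ⟨z, hz0, hzt, fun i => (congrFun hz i).symm⟩

theorem mem_addSliceSpace_of_obstacle (hmono : Monotone T) (hhom : AddHomog n T)
    {K : Set (Fin n)} {α β t : ℝ} (hαβ : α ≤ β) (hαT : ∀ i, α ≤ T 0 i)
    (hαK : ∀ i ∈ K, α ≤ T (Kᶜ.indicator fun _ => -t) i) {z : Fin n → ℝ} (hz0 : 0 ≤ z)
    (hz : ∀ i, z i = max (K.indicator (fun _ => t) i) (T z i - β)) :
    z ∈ addSliceSpace n T α β := by
  intro i
  refine ⟨?_, by linarith [hz i, le_max_right (K.indicator (fun _ => t) i) (T z i - β)]⟩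
  rcases max_choice (K.indicator (fun _ => t) i) (T z i - β) with h | h <;>
    have hzi := (hz i).trans h
  · by_cases hi : i ∈ K
    · -- `z` lies above `t e_K = t + (-t) e_{Kᶜ}`
      have hle : (fun k => (Kᶜ.indicator fun _ => -t) k + t) ≤ z := fun k => by
        have := (le_max_left _ _).trans (hz k).ge
        by_cases hk : k ∈ K
        · simpa [hk] using this
        · simpa [hk] using hz0 k
      have := hmono hle i
      rw [hhom.apply] at this
      simp only [hi, indicator_of_mem] at hzi
      linarith [hαK i hi]
    · simp only [hi, not_false_eq_true, indicator_of_notMem] at hzi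
      linarith [hmono hz0 i, hαT i]
  · linarith

theorem exists_mem_eq_zero_of_obstacle (hmono : Monotone T) (hhom : AddHomog n T)
    {K D : Set (Fin n)} (hKD : Disjoint K D) (hD : D.Nonempty)
    (hDcl : ∀ i ∈ D, ∀ j, GEdge n T i j → j ∈ D) {β t : ℝ} (hβ : ∀ i, T 0 i < β)
    {z : Fin n → ℝ} (hz : ∀ i, z i = max (K.indicator (fun _ => t) i) (T z i - β)) :
    ∃ j ∈ D, z j = 0 := by
  obtain ⟨j, hjD, hjmax⟩ := D.exists_max_image z D.toFinite hD
  refine ⟨j, hjD, ?_⟩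
  -- `T_j` only sees coordinates in `D`, where `z ≤ z j`
  have hTj : T z j = T (fun k => min (z k) (z j)) j :=
    dependsOn_supp (fun x => T x j) fun k hk => (min_eq_left (hjmax k (hDcl j hjD k hk))).symm
  have hlt : T z j - β < z j := by
    have := le_add_of_monotone_of_add_const (fun _ _ h => hmono h j) (hhom.apply j)
      (x := fun k => min (z k) (z j)) (y := 0) (c := z j) fun k => by simp
    linarith [hβ j]
  have hzj := hz j
  rw [indicator_of_notMem (disjoint_right.1 hKD hjD)] at hzj
  rcases max_choice 0 (T z j - β) with h | h <;> rw [h] at hzj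
  · exact hzj
  · linarith

theorem not_slicesBounded_of_disjoint (hmono : Monotone T) (hhom : AddHomog n T)
    {K D : Set (Fin n)} (hK : K.Nonempty) (hD : D.Nonempty) (hKD : Disjoint K D)
    (hDcl : ∀ i ∈ D, ∀ j, GEdge n T i j → j ∈ D)
    (hbdd : ∀ i ∈ K, BddBelow ((fun t => T (Kᶜ.indicator fun _ => -t) i) '' Ici 0)) :
    ¬ SlicesBounded n T := by
  obtain ⟨b, hb⟩ := K.toFinite.bddBelow_biUnion.2 hbdd
  obtain ⟨a, ha⟩ := (finite_range (T 0)).bddBelow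
  obtain ⟨β₀, hβ₀⟩ := (finite_range (T 0)).bddAbove
  obtain ⟨i₀, hi₀⟩ := hK
  set α := min a b
  set β := β₀ + 1
  have hβ : ∀ i, T 0 i < β := fun i => by linarith [hβ₀ (mem_range_self i)]
  have hαT : ∀ i, α ≤ T 0 i := fun i => (min_le_left _ _).trans (ha (mem_range_self i))
  intro hbounded
  obtain ⟨M, hM⟩ := hbounded α β ((hαT i₀).trans (hβ i₀).le)
  set t := max M 0 + 1
  have ht : 0 ≤ t := by positivity
  have hαK : ∀ i ∈ K, α ≤ T (Kᶜ.indicator fun _ => -t) i := fun i hi =>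
    (min_le_right _ _).trans (hb (mem_iUnion₂.2 ⟨i, hi, t, ht, rfl⟩))
  obtain ⟨z, hz0, hzt, hz⟩ := exists_obstacle_fixedPoint hmono hhom K (fun i => (hβ i).le) ht
  obtain ⟨j, -, hzj⟩ := exists_mem_eq_zero_of_obstacle hmono hhom hKD hD hDcl hβ hz
  have hzi₀ : z i₀ = t :=
    le_antisymm (hzt i₀) (by simpa [hi₀] using (le_max_left _ _).trans (hz i₀).ge)
  have := (sub_le_hilbertSeminorm z i₀ j).trans
    (hM z (mem_addSliceSpace_of_obstacle hmono hhom ((hαT i₀).trans (hβ i₀).le) hαT hαK hz0 hz))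
  linarith [le_max_left M 0]

theorem not_slicesBounded_of_ne_finalClass (hmono : Monotone T) (hhom : AddHomog n T)
    {C C' : Set (Fin n)} (hC : FinalClass n T C) (hC' : FinalClass n T C') (hne : C ≠ C') :
    ¬ SlicesBounded n T := by
  refine not_slicesBounded_of_disjoint hmono hhom hC'.1 hC.1
    (disjoint_left.2 fun v hv' hv => hne (hC.eq_of_mem hC' hv hv')) hC.2.1
    fun i hi => ⟨T 0 i, ?_⟩
  rintro _ ⟨t, -, rfl⟩
  exact (dependsOn_supp (fun x => T x i) fun j hj => by simp [hC'.2.1 i hi j hj]).ge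

theorem not_slicesBounded_of_hReach_ne_univ (hmono : Monotone T) (hhom : AddHomog n T)
    {C : Set (Fin n)} (hC : FinalClass n T C) (hne : HReach n T C ≠ univ) :
    ¬ SlicesBounded n T := by
  refine not_slicesBounded_of_disjoint hmono hhom (nonempty_compl.2 hne) hC.1
    (disjoint_compl_left_iff_subset.2 (subset_hReach C)) hC.2.1 fun i hi => ?_
  rw [compl_compl]
  by_contra hunb
  refine hi (hClosed_hReach C _ i (hC.1.mono (subset_hReach C)) subset_rfl hi fun c => ?_)
  obtain ⟨_, ⟨t, ht, rfl⟩, hlt⟩ := not_bddBelow_iff.1 hunb c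
  exact ⟨t, ht, hlt⟩

end Unbounded

theorem stmt16 (n : ℕ) (hn : 1 ≤ n)
    (T : (Fin n → ℝ) → (Fin n → ℝ))
    (hmono : Monotone T) (hhom : AddHomog n T)
    (hconv : ∀ i, ConvexOn ℝ Set.univ (fun x => T x i)) :
    (∀ α β : ℝ, α ≤ β →
        ∃ M : ℝ, ∀ x ∈ addSliceSpace n T α β, hilbertSeminorm n x ≤ M) ↔
    (∃ C : Set (Fin n), FinalClass n T C ∧
        (∀ C' : Set (Fin n), FinalClass n T C' → C' = C) ∧
        HReach n T C = Set.univ) := by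
  obtain ⟨C₀, hC₀, -⟩ := exists_finalClass_subset (T := T) (D := univ) ⟨⟨0, hn⟩, trivial⟩
    fun _ _ _ _ => trivial
  constructor
  · intro hbounded
    refine ⟨C₀, hC₀, fun C hC => ?_, ?_⟩
    · by_contra hne
      exact not_slicesBounded_of_ne_finalClass hmono hhom hC₀ hC (Ne.symm hne) hbounded
    · by_contra hne
      exact not_slicesBounded_of_hReach_ne_univ hmono hhom hC₀ hne hbounded
  · rintro ⟨C, hC, huniq, hreach⟩
    exact slicesBounded_of_unique_finalClass hmono hhom hconv hC huniq hreach
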